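/- Fix a constant q > 0 and the bowl transform ψ : ℝ^p → ℝ^(p+1). Then ψ is redescending: ψ(x) converges to the origin of ℝ^(p+1) as ‖x‖ → ∞; that is, for every ε > 0 there exists R > 0 such that ‖x‖ > R implies ‖ψ(x)‖ < ε. -/

import Mathlib

/-!
Since `1 - tanh t = 2 / (exp (2t) + 1) ≤ 1/t`, both components of `ψ(x)` carry the factor
`(1 - u)² ≤ q² / ‖x‖²`, which beats the linear growth of `v₁(x)` in `‖x‖`.
-/

open Real

/-- The bowl transform `ψ : ℝ^p → ℝ^(p+1)`.  With `u(x) = tanh(‖x‖/q)`, the first `p`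
coordinates are `v₁(x) = 10·u(x)²·(1−u(x))²·x` and the last coordinate is
`v₂(x) = 10·u(x)⁶·(1−u(x))²`. -/
noncomputable def bowl (p : ℕ) (q : ℝ) (x : EuclideanSpace ℝ (Fin p)) :
    EuclideanSpace ℝ (Fin (p + 1)) :=
  WithLp.toLp 2 (Fin.snoc
    (fun i : Fin p =>
      10 * Real.tanh (‖x‖ / q) ^ 2 * (1 - Real.tanh (‖x‖ / q)) ^ 2 * x i)
    (10 * Real.tanh (‖x‖ / q) ^ 6 * (1 - Real.tanh (‖x‖ / q)) ^ 2))

theorem EuclideanSpace.norm_toLp_snoc_sq {𝕜 : Type*} [RCLike 𝕜] {n : ℕ}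
    (v : EuclideanSpace 𝕜 (Fin n)) (a : 𝕜) :
    ‖(WithLp.toLp 2 (Fin.snoc v.ofLp a : Fin (n + 1) → 𝕜) :
        EuclideanSpace 𝕜 (Fin (n + 1)))‖ ^ 2 = ‖v‖ ^ 2 + ‖a‖ ^ 2 := by
  simp [EuclideanSpace.norm_sq_eq, Fin.sum_univ_castSucc]

theorem Real.one_sub_tanh_eq (t : ℝ) : 1 - tanh t = 2 / (exp (2 * t) + 1) := by
  rw [tanh_eq, exp_neg, two_mul, exp_add]
  field_simp
  ring

theorem Real.one_sub_tanh_le_inv {t : ℝ} (ht : 0 < t) : 1 - tanh t ≤ t⁻¹ := by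
  rw [one_sub_tanh_eq, div_le_iff₀ (by positivity)]
  have hexp := add_one_le_exp (2 * t)
  rw [inv_mul_eq_div, le_div_iff₀ ht]
  nlinarith

theorem norm_bowl_le (p : ℕ) (q : ℝ) (x : EuclideanSpace ℝ (Fin p)) :
    ‖bowl p q x‖ ≤ 10 * (1 - tanh (‖x‖ / q)) ^ 2 * (‖x‖ + 1) := by
  set u := tanh (‖x‖ / q)
  have hu2 : u ^ 2 ≤ 1 := (tanh_sq_lt_one _).le
  have hu6 : u ^ 6 ≤ 1 := by simpa [← pow_mul] using pow_le_one₀ (sq_nonneg u) hu2 (n := 3)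
  have hsq : ‖bowl p q x‖ ^ 2 =
      (10 * u ^ 2 * (1 - u) ^ 2 * ‖x‖) ^ 2 + (10 * u ^ 6 * (1 - u) ^ 2) ^ 2 := by
    have := EuclideanSpace.norm_toLp_snoc_sq ((10 * u ^ 2 * (1 - u) ^ 2) • x)
      (10 * u ^ 6 * (1 - u) ^ 2)
    rw [norm_smul, Real.norm_of_nonneg (by positivity), Real.norm_eq_abs, sq_abs] at this
    exact this
  rw [← pow_le_pow_iff_left₀ (norm_nonneg _) (by positivity) two_ne_zero, hsq]
  calc (10 * u ^ 2 * (1 - u) ^ 2 * ‖x‖) ^ 2 + (10 * u ^ 6 * (1 - u) ^ 2) ^ 2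
      ≤ (10 * (1 - u) ^ 2 * ‖x‖) ^ 2 + (10 * (1 - u) ^ 2) ^ 2 := by gcongr <;> nlinarith
    _ ≤ (10 * (1 - u) ^ 2 * (‖x‖ + 1)) ^ 2 := by nlinarith [norm_nonneg x]

theorem norm_bowl_le_of_one_le {p : ℕ} {q : ℝ} (hq : 0 < q) {x : EuclideanSpace ℝ (Fin p)}
    (hx : 1 ≤ ‖x‖) : ‖bowl p q x‖ ≤ 20 * q ^ 2 / ‖x‖ := by
  have hx0 : 0 < ‖x‖ := one_pos.trans_le hx
  have htail : 1 - tanh (‖x‖ / q) ≤ q / ‖x‖ := by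
    simpa using one_sub_tanh_le_inv (div_pos hx0 hq)
  have htail0 : 0 ≤ 1 - tanh (‖x‖ / q) := sub_nonneg.2 (tanh_lt_one _).le
  calc ‖bowl p q x‖ ≤ 10 * (1 - tanh (‖x‖ / q)) ^ 2 * (‖x‖ + 1) := norm_bowl_le p q x
    _ ≤ 10 * (q / ‖x‖) ^ 2 * (2 * ‖x‖) := by gcongr; linarith
    _ = 20 * q ^ 2 / ‖x‖ := by field_simp; ring

/-- for `q > 0`, the bowl transform `ψ : ℝ^p → ℝ^(p+1)` is redescending:
`ψ(x) → 0` as `‖x‖ → ∞`, i.e. for every `ε > 0` there is `R > 0` such that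
`‖x‖ > R` implies `‖ψ(x)‖ < ε`. -/
theorem bowl_redescending (p : ℕ) (q : ℝ) (hq : 0 < q) :
    ∀ ε : ℝ, 0 < ε → ∃ R : ℝ, 0 < R ∧
      ∀ x : EuclideanSpace ℝ (Fin p), R < ‖x‖ → ‖bowl p q x‖ < ε := by
  intro ε hε
  refine ⟨max 1 (20 * q ^ 2 / ε), by positivity, fun x hx => ?_⟩
  have hx1 : 1 ≤ ‖x‖ := (le_max_left _ _).trans hx.le
  calc ‖bowl p q x‖ ≤ 20 * q ^ 2 / ‖x‖ := norm_bowl_le_of_one_le hq hx1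
    _ < ε := (div_lt_comm₀ (by positivity) hε).2 ((le_max_right _ _).trans_lt hx)
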